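/- Let θ, δ ∈ ℝ^d, let S be symmetric positive definite with S⁻¹ = S₋⁻¹ + g gᵀ for some symmetric positive definite S₋ and g ∈ ℝ^d, let e be a scalar, and define δ' = δ - S g e. Then (δ')ᵀ S⁻¹ δ' ≤ δᵀ S₋⁻¹ δ + (gᵀδ)² + gᵀ S g · e² - 2 gᵀ δ · e. -/
import Mathlib


open Matrix

/-- error recursion inequality of Theorem 1. If
`S⁻¹ = S₋⁻¹ + g gᵀ` and `δ' = δ - e • S g̃` with `g̃ = g`, then
`(δ')ᵀ S⁻¹ δ' ≤ δᵀ S₋⁻¹ δ + (gᵀδ)² + (gᵀ S g) e² - 2 (gᵀδ) e`. -/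
theorem stmt_12 {d : ℕ} (S Sm : Matrix (Fin d) (Fin d) ℝ)
    (hS : S.PosDef) (hSm : Sm.PosDef)
    (g gt : Fin d → ℝ) (hinv : S⁻¹ = Sm⁻¹ + vecMulVec g g)
    (δ δ' : Fin d → ℝ) (e : ℝ)
    (hδ' : δ' = δ - e • S.mulVec gt) (hgt : gt = g) :
    δ' ⬝ᵥ S⁻¹.mulVec δ'
      ≤ δ ⬝ᵥ Sm⁻¹.mulVec δ + (g ⬝ᵥ δ) ^ 2 + (g ⬝ᵥ S.mulVec g) * e ^ 2
          - 2 * (g ⬝ᵥ δ) * e := by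
  rw [hgt] at hδ'
  subst hδ'
  have hdet : IsUnit S.det := isUnit_iff_ne_zero.mpr (ne_of_gt hS.det_pos)
  have hinvmul : S⁻¹ * S = 1 := nonsing_inv_mul S hdet
  have hAsymm : (S⁻¹)ᵀ = S⁻¹ := by
    have := hS.inv.isHermitian
    simpa [Matrix.IsHermitian] using this
  have hAS : S⁻¹.mulVec (S.mulVec g) = g := by
    rw [mulVec_mulVec, hinvmul, one_mulVec]
  have h2 : δ ⬝ᵥ S⁻¹.mulVec (S.mulVec g) = g ⬝ᵥ δ := by
    rw [hAS, dotProduct_comm]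
  have h3 : (S.mulVec g) ⬝ᵥ S⁻¹.mulVec δ = g ⬝ᵥ δ := by
    rw [dotProduct_mulVec, ← mulVec_transpose, hAsymm, hAS]
  have h4 : (S.mulVec g) ⬝ᵥ S⁻¹.mulVec (S.mulVec g) = g ⬝ᵥ S.mulVec g := by
    rw [hAS, dotProduct_comm]
  have h1 : δ ⬝ᵥ S⁻¹.mulVec δ
      = δ ⬝ᵥ Sm⁻¹.mulVec δ + (g ⬝ᵥ δ) ^ 2 := by
    have hv : (vecMulVec g g) *ᵥ δ = (g ⬝ᵥ δ) • g := by
      funext i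
      simp only [mulVec, vecMulVec_apply, dotProduct, Pi.smul_apply, smul_eq_mul,
        Finset.mul_sum]
      rw [Finset.sum_mul]
      exact Finset.sum_congr rfl fun x _ => by ring
    rw [hinv, add_mulVec, dotProduct_add, hv, dotProduct_smul, smul_eq_mul,
      dotProduct_comm δ g, sq]
  have key : (δ - e • S.mulVec g) ⬝ᵥ S⁻¹.mulVec (δ - e • S.mulVec g)
      = δ ⬝ᵥ Sm⁻¹.mulVec δ + (g ⬝ᵥ δ) ^ 2 + (g ⬝ᵥ S.mulVec g) * e ^ 2
          - 2 * (g ⬝ᵥ δ) * e := by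
    rw [mulVec_sub, sub_dotProduct, dotProduct_sub, dotProduct_sub,
      mulVec_smul, dotProduct_smul, smul_dotProduct, smul_dotProduct,
      dotProduct_smul, h1, h2, h3, h4]
    simp only [smul_eq_mul]
    ring
  rw [key]
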